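/- arXiv:1009.3324 — 2 statements merged into one kernel-verified Lean document; each statement's English description precedes it below -/
import Mathlib

section
/- For every integer l ≥ 2 and residue 0 ≤ r ≤ l−1, the following identity of formal power series in q holds: ∑_{λ an l-core} q^{∑_{k∈ℤ} N_{kl−r}(λ)} = ∑_{(p_0,…,p_{l−1}) ∈ ℤ^l, ∑_i p_i = 0} q^{(1/2)∑_i p_i² + ∑_{i=l−r}^{l−1} p_i}. In particular all exponents occurring on the right-hand side are nonnegative integers, and for each N ≥ 0 the number of l-cores λ with ∑_{k∈ℤ} N_{kl−r}(λ) = N is finite and equals the number of integer vectors (p_i) with ∑p_i = 0 and (1/2)∑p_i² + ∑_{i=l−r}^{l−1} p_i = N. -/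
/-- A partition `λ = (λ_1 ≥ λ_2 ≥ ⋯)`: a non-increasing sequence of natural numbers with
finitely many nonzero terms.  Here `parts n` denotes `λ_{n+1}`. -/
structure Partition' where
  parts : ℕ → ℕ
  antitone : ∀ ⦃m n : ℕ⦄, m ≤ n → parts n ≤ parts m
  eventually_zero : ∃ N : ℕ, ∀ n ≥ N, parts n = 0

namespace Partition'

/-- `|λ|`, the number of boxes of the Young diagram of `λ`. -/
noncomputable def size (lam : Partition') : ℕ := ∑ᶠ n, lam.parts n

/-- The Young diagram of `λ`: boxes `(m, n)` (column `m`, row `n`) with `m < λ_{n+1}`. -/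
def cells (lam : Partition') : Set (ℕ × ℕ) := {c | c.1 < lam.parts c.2}

/-- Maya diagram of `λ`: `maya lam k` holds (bead value 1) iff `k ∉ {λ_m − m : m ≥ 1}`. -/
def maya (lam : Partition') (k : ℤ) : Prop :=
  ¬ ∃ m : ℕ, k = (lam.parts m : ℤ) - ((m : ℤ) + 1)

/-- The conjugate partition's `(m+1)`-st part: `λ'_{m+1} = #{rows of length > m}`. -/
noncomputable def conjParts (lam : Partition') (m : ℕ) : ℕ :=
  {j : ℕ | m < lam.parts j}.ncard

/-- Hook length of the box `(m, n)`: `(λ_{n+1} − 1 − m) + (λ'_{m+1} − 1 − n) + 1`. -/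
noncomputable def hookLength (lam : Partition') (m n : ℕ) : ℕ :=
  (lam.parts n - 1 - m) + (lam.conjParts m - 1 - n) + 1

end Partition'

/-- `c` is the charge of the 0/1-sequence `μ`:
`#{k < c : μ k = 1} = #{k ≥ c : μ k = 0}` (both sets finite). -/
def IsCharge (μ : ℤ → Prop) (c : ℤ) : Prop :=
  {k : ℤ | k < c ∧ μ k}.Finite ∧ {k : ℤ | c ≤ k ∧ ¬ μ k}.Finite ∧
    {k : ℤ | k < c ∧ μ k}.ncard = {k : ℤ | c ≤ k ∧ ¬ μ k}.ncard

/-- The `i`-th quotient sequence of the Maya diagram of `λ`: `μ_i(k) = μ_λ(l·k + i)`. -/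
def quotSeq (l : ℕ) (lam : Partition') (i : ℕ) : ℤ → Prop :=
  fun k => lam.maya ((l : ℤ) * k + (i : ℕ))

/-- `Q` is the `l`-quotient of `λ` with quotient charges `p`: for each `i`, `p i` is the
charge of the `i`-th quotient sequence `μ_i` and `μ_{Q i}(k) = μ_i(k + p i)`. -/
def IsQuotientWith (l : ℕ) (lam : Partition') (p : Fin l → ℤ) (Q : Fin l → Partition') : Prop :=
  ∀ i : Fin l, IsCharge (quotSeq l lam i) (p i) ∧
    ∀ k : ℤ, (Q i).maya k ↔ quotSeq l lam i (k + p i)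

/-- Two boxes are adjacent if they share an edge. -/
def Adj (a b : ℕ × ℕ) : Prop :=
  (a.1 = b.1 ∧ (a.2 = b.2 + 1 ∨ b.2 = a.2 + 1)) ∨
    (a.2 = b.2 ∧ (a.1 = b.1 + 1 ∨ b.1 = a.1 + 1))

/-- A set of boxes is connected: any two of its boxes are joined by a path of
edge-adjacent boxes inside the set. -/
def ConnectedIn (H : Set (ℕ × ℕ)) : Prop :=
  ∀ x ∈ H, ∀ y ∈ H,
    Relation.ReflTransGen (fun a b => a ∈ H ∧ b ∈ H ∧ Adj a b) x y

/-- `H` contains a 2×2 square of boxes. -/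
def HasSquare (H : Set (ℕ × ℕ)) : Prop :=
  ∃ m n : ℕ, (m, n) ∈ H ∧ (m + 1, n) ∈ H ∧ (m, n + 1) ∈ H ∧ (m + 1, n + 1) ∈ H

/-- `H` is a rim hook of length `l` of `λ`: a connected set of `l` boxes of `λ`,
containing no 2×2 square, whose removal leaves the Young diagram of a partition. -/
def IsRimHook (l : ℕ) (lam : Partition') (H : Set (ℕ × ℕ)) : Prop :=
  H ⊆ lam.cells ∧ H.Finite ∧ H.ncard = l ∧ ConnectedIn H ∧ ¬ HasSquare H ∧
    ∃ mu : Partition', mu.cells = lam.cells \ H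

/-- `μ` is obtained from `λ` by removing one rim hook of length `l`. -/
def RemoveHook (l : ℕ) (lam mu : Partition') : Prop :=
  ∃ H : Set (ℕ × ℕ), IsRimHook l lam H ∧ mu.cells = lam.cells \ H

/-- `λ` is an `l`-core: it admits no rim hook of length `l`. -/
def IsLCore (l : ℕ) (lam : Partition') : Prop := ¬ ∃ H : Set (ℕ × ℕ), IsRimHook l lam H

/-- `c` is the `l`-core of `λ`: obtained from `λ` by repeatedly removing rim hooks of
length `l` until none remain. -/
def IsCoreOf (l : ℕ) (lam c : Partition') : Prop :=
  Relation.ReflTransGen (RemoveHook l) lam c ∧ IsLCore l c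

/-- Number of boxes `(m,n)` of `λ` with content `m − n ≡ r (mod l)`. -/
noncomputable def contentCount (l : ℕ) (lam : Partition') (r : ℤ) : ℕ :=
  {c : ℕ × ℕ | c ∈ lam.cells ∧ ((c.1 : ℤ) - (c.2 : ℤ)) ≡ r [ZMOD (l : ℤ)]}.ncard

/-- `N_d(λ)`: the number of boxes `(m,n)` of `λ` with content `m − n = d`. -/
noncomputable def diagCount (lam : Partition') (d : ℤ) : ℕ :=
  {c : ℕ × ℕ | c ∈ lam.cells ∧ ((c.1 : ℤ) - (c.2 : ℤ)) = d}.ncard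

/-- `K` is the blended partition of the charges `p` and the `l`-tuple of partitions `R`:
`{p + K_m − m : m ≥ 1} = {l·(R_{i,m} − m + p_i) + i : 0 ≤ i ≤ l−1, m ≥ 1}` in `ℤ`. -/
def IsBlended (l : ℕ) (p : Fin l → ℤ) (R : Fin l → Partition') (K : Partition') : Prop :=
  {k : ℤ | ∃ m : ℕ, k = (∑ i, p i) + (K.parts m : ℤ) - ((m : ℤ) + 1)} =
    {k : ℤ | ∃ i : Fin l, ∃ m : ℕ,
      k = (l : ℤ) * (((R i).parts m : ℤ) - ((m : ℤ) + 1) + p i) + (i : ℕ)}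

/-!
Encode a partition `λ` by its beta numbers `β_n = λ_{n+1} - n - 1`. Removing a rim hook of
length `l` amounts to moving one beta number `β` down to the vacant position `β - l`, so `λ` is an
`l`-core exactly when `β - l` is a beta number together with every beta number `β`. Sorted by
residue mod `l`, the beta numbers of a core are then the `l q + i` with `q < p_i` for integer
charges `p_i`; the charges satisfy `∑ p_i = 0`, determine the core, and every such vector occurs.
Counting the boxes of content `≡ -r (mod l)` row by row and regrouping the count by residue
classes gives `2 · #boxes = ∑ p_i² + 2 ∑_{i ≥ l - r} p_i`, a form that is even, nonnegative and
proper on `{∑ p_i = 0}`.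
-/
open Finset

lemma antitone_add_natCast_of_strictAnti {f : ℕ → ℤ} (hf : StrictAnti f) :
    Antitone fun n => f n + n :=
  antitone_nat_of_succ_le fun n => by have := hf (show n < n + 1 by omega); push_cast; omega

namespace Partition'

@[simp] lemma mem_cells {P : Partition'} {c : ℕ × ℕ} : c ∈ P.cells ↔ c.1 < P.parts c.2 :=
  Iff.rfl

lemma ext_parts {P Q : Partition'} (h : P.parts = Q.parts) : P = Q := by
  cases P; cases Q; simpa using h

/-- `maya` is the indicator of the complement of the beta numbers. -/
def beta (P : Partition') (n : ℕ) : ℤ := P.parts n - n - 1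

lemma coe_parts (P : Partition') (n : ℕ) : (P.parts n : ℤ) = P.beta n + n + 1 := by
  unfold beta; ring

lemma beta_strictAnti (P : Partition') : StrictAnti P.beta :=
  strictAnti_nat_of_succ_lt fun n => by
    have := P.antitone (show n ≤ n + 1 by omega); unfold beta; push_cast; omega

lemma neg_sub_one_le_beta (P : Partition') (n : ℕ) : -(n : ℤ) - 1 ≤ P.beta n := by
  unfold beta; omega

lemma beta_add_le_beta_zero (P : Partition') (n : ℕ) : P.beta n + n ≤ P.beta 0 := by
  simpa using antitone_add_natCast_of_strictAnti P.beta_strictAnti (Nat.zero_le n)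

lemma beta_eq_of_parts_eq_zero {P : Partition'} {n : ℕ} (h : P.parts n = 0) :
    P.beta n = -n - 1 := by
  simp [beta, h]

lemma mem_range_beta_of_lt {P : Partition'} {N : ℕ} (hN : ∀ n ≥ N, P.parts n = 0) {k : ℤ}
    (hk : k < -N) : k ∈ Set.range P.beta :=
  ⟨(-k - 1).toNat, by rw [beta_eq_of_parts_eq_zero (hN _ (by omega))]; omega⟩

lemma eq_of_range_beta_eq {P Q : Partition'} (h : Set.range P.beta = Set.range Q.beta) :
    P = Q := by
  have hβ : P.beta = Q.beta :=
    (StrictMono.range_inj (γ := ℤᵒᵈ) P.beta_strictAnti Q.beta_strictAnti).mp h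
  exact ext_parts <| funext fun n => by
    have := P.coe_parts n; have := Q.coe_parts n; rw [hβ] at *; omega

def ofBeta (f : ℕ → ℤ) (hf : StrictAnti f) (hN : ∃ N : ℕ, ∀ n ≥ N, f n = -n - 1) :
    Partition' where
  parts n := (f n + n + 1).toNat
  antitone _ _ hmn := by
    have := antitone_add_natCast_of_strictAnti hf hmn; dsimp only at this; omega
  eventually_zero := hN.imp fun N hN n hn => by rw [hN n hn]; omega

lemma beta_ofBeta (f : ℕ → ℤ) (hf : StrictAnti f) (hN : ∃ N : ℕ, ∀ n ≥ N, f n = -n - 1) :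
    (ofBeta f hf hN).beta = f := by
  obtain ⟨N, hN'⟩ := hN
  funext n
  have : f (max n N) + (max n N : ℕ) ≤ f n + n :=
    antitone_add_natCast_of_strictAnti hf (le_max_left n N)
  have := hN' _ (le_max_right n N)
  show ((f n + n + 1).toNat : ℤ) - n - 1 = f n
  omega

theorem exists_range_beta_eq (B : Set ℤ) (K : ℕ) (hlow : ∀ k : ℤ, k < -K → k ∈ B)
    (hhigh : ∀ k ∈ B, k < K) (hcard : (B ∩ Set.Ico (-K : ℤ) K).ncard = K) :
    ∃ P : Partition', Set.range P.beta = B := by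
  classical
  set s : Finset ℤ := (Ico (-K : ℤ) K).filter (· ∈ B)
  have hs : s.card = K := by
    rw [← hcard, ← Set.ncard_coe_finset]; congr 1; ext; simp [s]; tauto
  have hsB : ∀ k ∈ s, k ∈ B ∧ -(K : ℤ) ≤ k := fun k hk => by
    simp only [s, mem_filter, mem_Ico] at hk; exact ⟨hk.2, hk.1.1⟩
  set e := s.orderEmbOfFin hs
  have he : ∀ j, e j ∈ s := s.orderEmbOfFin_mem hs
  -- the elements of `s` in decreasing order, followed by `-K-1, -K-2, …`
  let f : ℕ → ℤ := fun n => if h : n < K then e ⟨K - 1 - n, by omega⟩ else -n - 1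
  have hf : StrictAnti f := strictAnti_nat_of_succ_lt fun n => by
    simp only [f]
    split_ifs with h1 h2 h2
    · exact e.strictMono (Fin.mk_lt_mk.mpr (by omega))
    · omega
    · have := (hsB _ (he ⟨K - 1 - n, by omega⟩)).2; push_cast; omega
    · omega
  have hfN : ∃ N : ℕ, ∀ n ≥ N, f n = -n - 1 := ⟨K, fun n hn => dif_neg (by omega)⟩
  refine ⟨ofBeta f hf hfN, ?_⟩
  rw [beta_ofBeta]
  ext k
  constructor
  · rintro ⟨n, rfl⟩
    simp only [f]
    split_ifs with h
    · exact (hsB _ (he _)).1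
    · exact hlow _ (by omega)
  · intro hk
    by_cases hkK : k < -K
    · exact ⟨(-k - 1).toNat, by simp only [f]; rw [dif_neg (by omega)]; omega⟩
    · have hks : k ∈ s := by simp [s, hk, hhigh k hk]; omega
      rw [← Finset.mem_coe, ← Finset.range_orderEmbOfFin s hs] at hks
      obtain ⟨j, rfl⟩ := hks
      refine ⟨K - 1 - j, ?_⟩
      simp only [f, dif_pos (show K - 1 - (j : ℕ) < K by omega)]
      exact congrArg e (Fin.ext (by dsimp only; omega))

end Partition'

section Residues

variable {l : ℕ} [NeZero l]

lemma exists_eq_mul_add_fin (b : ℤ) : ∃ (q : ℤ) (i : Fin l), b = l * q + i :=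
  ⟨_, _, by rw [mul_comm]; exact ((Int.divModEquiv l).symm_apply_apply b).symm⟩

lemma mul_add_fin_inj {q q' : ℤ} {i i' : Fin l} (h : (l : ℤ) * q + i = l * q' + i') :
    q = q' ∧ i = i' := by
  have := (Int.divModEquiv l).symm.injective (a₁ := (q, i)) (a₂ := (q', i'))
    (by simpa [mul_comm] using h)
  simpa using this

lemma sum_Ico_mul_eq {M : Type*} [AddCommMonoid M] (u v : ℤ) (g : ℤ → M) :
    ∑ b ∈ Ico (l * u) (l * v), g b = ∑ i : Fin l, ∑ q ∈ Ico u v, g (l * q + i) := by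
  have hl : (0 : ℤ) < l := by exact_mod_cast Nat.pos_of_neZero l
  rw [← sum_product_right (Ico u v) (univ : Finset (Fin l)) fun x => g (l * x.1 + (x.2 : ℕ))]
  refine sum_equiv (Int.divModEquiv l) (fun b => ?_) (fun b _ => ?_)
  · simp only [mem_Ico, Int.divModEquiv_apply, mem_product, mem_univ, and_true,
      Int.le_ediv_iff_mul_le hl, Int.ediv_lt_iff_lt_mul hl, mul_comm _ (l : ℤ)]
  · conv_lhs => rw [← (Int.divModEquiv l).symm_apply_apply b]
    simp only [Int.divModEquiv_symm_apply, mul_comm]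

lemma sum_filter_Ico_mul_eq {M : Type*} [AddCommMonoid M] {B : Set ℤ} [DecidablePred (· ∈ B)]
    {p : Fin l → ℤ} (hB : ∀ (i : Fin l) (q : ℤ), (l : ℤ) * q + i ∈ B ↔ q < p i) {u v : ℤ}
    (hv : ∀ i, p i ≤ v) (g : ℤ → M) :
    ∑ b ∈ (Ico (l * u) (l * v)).filter (· ∈ B), g b =
      ∑ i : Fin l, ∑ q ∈ Ico u (p i), g (l * q + i) := by
  rw [sum_filter, sum_Ico_mul_eq]
  refine sum_congr rfl fun i _ => ?_
  simp_rw [hB, ← sum_filter, Ico_filter_lt, min_eq_right (hv i)]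

end Residues

lemma sum_Ico_sub_eq {M : Type*} [AddCommGroup M] (h : ℤ → M) {a b : ℤ} (hab : a ≤ b) :
    ∑ q ∈ Ico a b, (h (q + 1) - h q) = h b - h a := by
  induction b, hab using Int.leInduction with
  | base => simp
  | succ b hab ih =>
    rw [Ico_add_one_right_eq_Icc, ← Ico_insert_right hab, sum_insert right_notMem_Ico, ih]
    abel

lemma exists_forall_mem_iff_lt {S : Set ℤ} (hdown : ∀ q ∈ S, q - 1 ∈ S) (hne : S.Nonempty)
    (hbdd : BddAbove S) : ∃ p, ∀ q, q ∈ S ↔ q < p := by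
  refine ⟨sSup S + 1, fun q => ⟨fun hq => Int.lt_add_one_iff.mpr (le_csSup hbdd hq), fun hq => ?_⟩⟩
  have hmem : ∀ k : ℕ, sSup S - k ∈ S := fun k => by
    induction k with
    | zero => simpa using Int.csSup_mem hne hbdd
    | succ k ih => simpa [sub_add_eq_sub_sub] using hdown _ ih
  have hq' := hmem (sSup S - q).toNat
  rwa [Int.toNat_of_nonneg (by omega), sub_sub_cancel] at hq'

lemma setOf_mem_rows_eq (S : ℕ → Finset ℕ) {N : ℕ} (hS : ∀ n ≥ N, S n = ∅) :
    {c : ℕ × ℕ | c.1 ∈ S c.2} = ↑((range N).biUnion fun n => S n ×ˢ {n}) := by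
  ext ⟨m, n⟩
  simp only [Set.mem_ofPred_eq, coe_biUnion, coe_range, Set.mem_Iio, coe_product, coe_singleton,
    Set.mem_iUnion, Set.mem_prod, Finset.mem_coe, Set.mem_singleton_iff, exists_prop]
  refine ⟨fun h => ⟨n, ?_, h, rfl⟩, fun ⟨_, _, h, rfl⟩ => h⟩
  by_contra hn
  simp [hS n (by omega)] at h

lemma ncard_setOf_mem_rows (S : ℕ → Finset ℕ) {N : ℕ} (hS : ∀ n ≥ N, S n = ∅) :
    {c : ℕ × ℕ | c.1 ∈ S c.2}.ncard = ∑ n ∈ range N, (S n).card := by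
  rw [setOf_mem_rows_eq S hS, Set.ncard_coe_finset, card_biUnion]
  · simp
  · intro n _ n' _ hnn'
    exact disjoint_product.mpr (Or.inr (disjoint_singleton.mpr hnn'))

namespace Partition'

/-- Compares the beta numbers of `P` with those of the empty partition, `-1, -2, …`; only
finitely many terms are nonzero. -/
noncomputable def betaSum (P : Partition') (g : ℤ → ℤ) : ℤ :=
  ∑ᶠ n : ℕ, (g (P.beta n) - g (-n - 1))

lemma betaSum_eq_sum_range {P : Partition'} {N : ℕ} (hN : ∀ n ≥ N, P.parts n = 0)
    (g : ℤ → ℤ) : P.betaSum g = ∑ n ∈ range N, (g (P.beta n) - g (-n - 1)) := by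
  refine finsum_eq_sum_of_support_subset _ fun n hn => ?_
  by_contra h
  simp only [coe_range, Set.mem_Iio, not_lt] at h
  simp [beta_eq_of_parts_eq_zero (hN n h)] at hn

lemma betaSum_const_mul (P : Partition') (c : ℤ) (g : ℤ → ℤ) :
    P.betaSum (fun x => c * g x) = c * P.betaSum g := by
  obtain ⟨N, hN⟩ := P.eventually_zero
  simp only [betaSum_eq_sum_range hN, mul_sum, mul_sub]

lemma contentCount_eq_betaSum {l : ℕ} (hl : 0 < l) (P : Partition') (s : ℤ) :
    (contentCount l P s : ℤ) = P.betaSum fun x => (x - s) / l := by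
  classical
  obtain ⟨N, hN⟩ := P.eventually_zero
  let S : ℕ → Finset ℕ := fun n => (range (P.parts n)).filter fun m => (m - n : ℤ) ≡ s [ZMOD l]
  have hS : ∀ n ≥ N, S n = ∅ := fun n hn => by simp [S, hN n hn]
  have hset : {c : ℕ × ℕ | c ∈ P.cells ∧ ((c.1 : ℤ) - (c.2 : ℤ)) ≡ s [ZMOD (l : ℤ)]} =
      {c : ℕ × ℕ | c.1 ∈ S c.2} := by
    ext; simp [S]
  -- in row `n` the contents are `−n, …, β_n`
  have hrow : ∀ n, (S n).card = ((Ioc (-(n : ℤ) - 1) (P.beta n)).filter (· ≡ s [ZMOD l])).card :=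
    fun n => card_nbij' (fun m => (m : ℤ) - n) (fun x => (x + n).toNat)
      (fun m hm => by
        simp only [S, coe_filter, mem_range, Set.mem_ofPred_eq, mem_Ioc] at hm ⊢
        have := P.coe_parts n; exact ⟨⟨by omega, by omega⟩, hm.2⟩)
      (fun x hx => by
        simp only [S, coe_filter, mem_Ioc, Set.mem_ofPred_eq, mem_range] at hx ⊢
        have := P.coe_parts n
        refine ⟨by omega, ?_⟩
        rw [Int.toNat_of_nonneg (by omega), add_sub_cancel_right]
        exact hx.2)
      (fun m _ => by simp)
      (fun x hx => by simp only [coe_filter, mem_Ioc, Set.mem_ofPred_eq] at hx; simp only; omega)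
  have hl' : (0 : ℤ) < l := by exact_mod_cast hl
  rw [contentCount, hset, ncard_setOf_mem_rows S hS, betaSum_eq_sum_range hN, Nat.cast_sum]
  have hfloor : ∀ a : ℤ, ⌊((a : ℚ) - s) / (l : ℤ)⌋ = (a - s) / l := fun a => by
    rw [← Int.cast_sub, Int.cast_natCast, Rat.floor_intCast_div_natCast]
  refine sum_congr rfl fun n _ => ?_
  rw [hrow, Int.Ioc_filter_modEq_card _ _ hl', hfloor, hfloor, max_eq_left]
  exact sub_nonneg.mpr (Int.ediv_le_ediv hl' (by linarith [P.neg_sub_one_le_beta n]))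

end Partition'

/-- Twice the exponent `(1/2) ∑ p_i² + ∑_{i = l-r}^{l-1} p_i` of the theta series. -/
def thetaWeight (l r : ℕ) (p : Fin l → ℤ) : ℤ :=
  ∑ i, p i ^ 2 + 2 * ∑ i ∈ univ.filter (fun i : Fin l => l - r ≤ (i : ℕ)), p i

section ThetaWeight

variable {l r : ℕ} {p : Fin l → ℤ}

lemma cast_thetaWeight (p : Fin l → ℤ) :
    (thetaWeight l r p : ℚ) = 2 * ((∑ i, (p i : ℚ) ^ 2) / 2 +
      ∑ i ∈ univ.filter (fun i : Fin l => l - r ≤ (i : ℕ)), (p i : ℚ)) := by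
  simp only [thetaWeight]; push_cast; ring

lemma thetaWeight_eq_sum_mul (hp : ∑ i, p i = 0) :
    thetaWeight l r p = ∑ i, p i * (p i + if l - r ≤ (i : ℕ) then 1 else -1) := by
  have hsplit := sum_filter_add_sum_filter_not univ (fun i : Fin l => l - r ≤ (i : ℕ)) p
  simp only [mul_add, mul_ite, mul_one, mul_neg, sum_add_distrib, sum_ite, sum_neg_distrib,
    thetaWeight, sq]
  linarith

lemma even_mul_add_sign (x : ℤ) {s : ℤ} (hs : s = 1 ∨ s = -1) : Even (x * (x + s)) := by
  rcases hs with rfl | rfl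
  · exact Int.even_mul_succ_self x
  · simpa [mul_comm, ← sub_eq_add_neg] using Int.even_mul_succ_self (x - 1)

lemma abs_le_mul_add_sign (x : ℤ) {s : ℤ} (hs : s = 1 ∨ s = -1) : |x| ≤ x * (x + s) + 1 := by
  rcases hs with rfl | rfl <;> rcases abs_cases x with ⟨h, _⟩ | ⟨h, _⟩ <;> rw [h] <;>
    nlinarith [sq_nonneg (x - 1), sq_nonneg (x + 1)]

lemma mul_add_sign_nonneg (x : ℤ) {s : ℤ} (hs : s = 1 ∨ s = -1) : 0 ≤ x * (x + s) := by
  obtain ⟨k, hk⟩ := even_mul_add_sign x hs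
  have := abs_le_mul_add_sign x hs
  have := abs_nonneg x
  omega

lemma ite_eq_one_or_eq_neg_one (c : Prop) [Decidable c] :
    (if c then 1 else -1 : ℤ) = 1 ∨ (if c then 1 else -1 : ℤ) = -1 := by
  split_ifs <;> simp

lemma even_thetaWeight (hp : ∑ i, p i = 0) : Even (thetaWeight l r p) := by
  rw [thetaWeight_eq_sum_mul hp]
  exact Finset.even_sum _ fun i _ => even_mul_add_sign _ (ite_eq_one_or_eq_neg_one _)

lemma thetaWeight_nonneg (hp : ∑ i, p i = 0) : 0 ≤ thetaWeight l r p := by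
  rw [thetaWeight_eq_sum_mul hp]
  exact sum_nonneg fun i _ => mul_add_sign_nonneg _ (ite_eq_one_or_eq_neg_one _)

lemma abs_le_thetaWeight (hp : ∑ i, p i = 0) (i : Fin l) : |p i| ≤ thetaWeight l r p + 1 := by
  rw [thetaWeight_eq_sum_mul hp]
  have := single_le_sum (fun j _ => mul_add_sign_nonneg (p j)
    (ite_eq_one_or_eq_neg_one (l - r ≤ (j : ℕ)))) (mem_univ i)
  linarith [abs_le_mul_add_sign (p i) (ite_eq_one_or_eq_neg_one (l - r ≤ (i : ℕ)))]

lemma finite_setOf_thetaWeight_eq (l r : ℕ) (K : ℤ) :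
    {p : Fin l → ℤ | ∑ i, p i = 0 ∧ thetaWeight l r p = K}.Finite :=
  (Set.Finite.pi fun _ => Set.finite_Icc (-K - 1) (K + 1)).subset fun p ⟨hp, hK⟩ i _ => by
    have := abs_le_thetaWeight (r := r) hp i
    rw [hK] at this
    exact abs_le.mp this |>.imp (by omega) (by omega)

end ThetaWeight

namespace Partition'

lemma image_beta_range {P : Partition'} {T : ℕ} (hT : ∀ n ≥ T, P.parts n = 0)
    (hβ : P.beta 0 < T) [DecidablePred (· ∈ Set.range P.beta)] :
    (range T).image P.beta = (Ico (-T : ℤ) T).filter (· ∈ Set.range P.beta) := by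
  ext b
  simp only [mem_image, mem_range, mem_filter, mem_Ico, Set.mem_range]
  constructor
  · rintro ⟨n, hn, rfl⟩
    have := P.neg_sub_one_le_beta n
    have := P.beta_add_le_beta_zero n
    exact ⟨⟨by omega, by omega⟩, n, rfl⟩
  · rintro ⟨⟨hb, -⟩, n, rfl⟩
    refine ⟨n, ?_, rfl⟩
    by_contra h
    rw [beta_eq_of_parts_eq_zero (hT n (by omega))] at hb
    omega

lemma image_neg_sub_one_range (T : ℕ) :
    (range T).image (fun n : ℕ => -(n : ℤ) - 1) = Ico (-T : ℤ) 0 := by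
  ext b
  simp only [mem_image, mem_range, mem_Ico]
  exact ⟨by rintro ⟨n, hn, rfl⟩; omega, fun h => ⟨(-b - 1).toNat, by omega, by omega⟩⟩

end Partition'

open Partition'

def HasCharges (l : ℕ) (P : Partition') (p : Fin l → ℤ) : Prop :=
  ∀ (i : Fin l) (q : ℤ), (l : ℤ) * q + i ∈ Set.range P.beta ↔ q < p i

lemma mul_add_add_ediv_eq {l r : ℕ} (hr : r < l) (i : Fin l) (q : ℤ) :
    ((l : ℤ) * q + i + r) / l = q + if l - r ≤ (i : ℕ) then 1 else 0 := by
  have hl : (0 : ℤ) < l := by omega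
  have hi := i.isLt
  split_ifs
  · exact ((Int.ediv_emod_unique (r := (i : ℤ) + r - l) hl).mpr ⟨by ring, by omega, by omega⟩).1
  · exact ((Int.ediv_emod_unique (r := (i : ℤ) + r) hl).mpr ⟨by ring, by omega, by omega⟩).1

namespace HasCharges

variable {l : ℕ} {P : Partition'} {p : Fin l → ℤ}

/-- Sums over the beta numbers are computed one residue class at a time; `H i` is a discrete
antiderivative of `q ↦ g (l q + i)`. -/
theorem betaSum_eq [NeZero l] (h : HasCharges l P p) {g : ℤ → ℤ} (H : Fin l → ℤ → ℤ)
    (hgH : ∀ (i : Fin l) (q : ℤ), g (l * q + i) = H i (q + 1) - H i q) :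
    P.betaSum g = ∑ i, (H i (p i) - H i 0) := by
  classical
  obtain ⟨N, hN⟩ := P.eventually_zero
  obtain ⟨M₀, hM₀⟩ := Finite.exists_le fun i => (p i).natAbs
  set M : ℕ := M₀ + N + (P.beta 0).toNat + 1
  have hlM : M ≤ l * M := Nat.le_mul_of_pos_left M (Nat.pos_of_neZero l)
  have hp : ∀ i, -(M : ℤ) ≤ p i ∧ p i ≤ M := fun i => by have := hM₀ i; omega
  have hT : ∀ n ≥ l * M, P.parts n = 0 := fun n hn => hN n (by omega)
  have hIco : ∀ v : ℤ, Ico (-((l * M : ℕ) : ℤ)) v = Ico ((l : ℤ) * -M) v := fun v => by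
    push_cast; ring_nf
  have hbeta : ∑ n ∈ range (l * M), g (P.beta n) =
      ∑ i : Fin l, ∑ q ∈ Ico (-(M : ℤ)) (p i), g (l * q + i) := by
    rw [← sum_image fun _ _ _ _ hmn => P.beta_strictAnti.injective hmn,
      image_beta_range hT (by omega), hIco, show (((l * M : ℕ)) : ℤ) = l * M by push_cast; rfl,
      sum_filter_Ico_mul_eq h fun i => (hp i).2]
  have hempty : ∑ n ∈ range (l * M), g (-n - 1) =
      ∑ i : Fin l, ∑ q ∈ Ico (-(M : ℤ)) 0, g (l * q + i) := by
    have := sum_Ico_mul_eq (l := l) (-(M : ℤ)) 0 g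
    rw [mul_zero] at this
    rw [← sum_image fun _ _ _ _ hmn => by simpa using hmn, image_neg_sub_one_range, hIco, this]
  rw [betaSum_eq_sum_range hT, sum_sub_distrib, hbeta, hempty, ← sum_sub_distrib]
  refine sum_congr rfl fun i _ => ?_
  simp only [hgH, sum_Ico_sub_eq _ (hp i).1, sum_Ico_sub_eq _ (show -(M : ℤ) ≤ 0 by omega)]
  abel

theorem sum_eq_zero [NeZero l] (h : HasCharges l P p) : ∑ i, p i = 0 := by
  simpa [betaSum] using (h.betaSum_eq (g := fun _ => 1) (fun _ q => q) fun _ _ => by ring).symm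

theorem two_mul_contentCount [NeZero l] (h : HasCharges l P p) {r : ℕ} (hr : r < l) :
    2 * (contentCount l P (-r) : ℤ) = thetaWeight l r p := by
  set c : Fin l → ℤ := fun i => if l - r ≤ (i : ℕ) then 1 else 0
  have hc : ∑ i ∈ univ.filter (fun i : Fin l => l - r ≤ (i : ℕ)), p i = ∑ i, c i * p i := by
    rw [sum_filter]; exact sum_congr rfl fun i _ => by simp only [c]; split_ifs <;> simp
  have key := h.betaSum_eq (g := fun x => 2 * ((x - -r) / l))
    (fun i q => q ^ 2 - q + 2 * c i * q) fun i q => by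
      rw [sub_neg_eq_add, mul_add_add_ediv_eq hr]; ring
  rw [contentCount_eq_betaSum (Nat.pos_of_neZero l), ← betaSum_const_mul, key, thetaWeight, hc,
    mul_sum, ← sum_add_distrib]
  have hterm : ∀ i, p i ^ 2 - p i + 2 * c i * p i - (0 ^ 2 - 0 + 2 * c i * 0) =
      p i ^ 2 + 2 * (c i * p i) - p i := fun i => by ring
  rw [sum_congr rfl fun i _ => hterm i, sum_sub_distrib, h.sum_eq_zero, sub_zero]

theorem beta_sub_mem [NeZero l] (h : HasCharges l P p) (n : ℕ) :
    P.beta n - l ∈ Set.range P.beta := by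
  obtain ⟨q, i, hqi⟩ := exists_eq_mul_add_fin (l := l) (P.beta n)
  have hq := (h i q).mp ⟨n, hqi⟩
  have := (h i (q - 1)).mpr (by omega)
  rwa [hqi, show (l : ℤ) * q + i - l = l * (q - 1) + i by ring]

theorem eq_of_hasCharges [NeZero l] {P' : Partition'} (h : HasCharges l P p)
    (h' : HasCharges l P' p) : P = P' :=
  eq_of_range_beta_eq <| Set.ext fun b => by
    obtain ⟨q, i, rfl⟩ := exists_eq_mul_add_fin (l := l) b
    rw [h i q, h' i q]

theorem unique {p' : Fin l → ℤ} (h : HasCharges l P p) (h' : HasCharges l P p') : p = p' :=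
  funext fun i => le_antisymm (le_of_forall_lt fun q hq => (h' i q).mp ((h i q).mpr hq))
    (le_of_forall_lt fun q hq => (h i q).mp ((h' i q).mpr hq))

end HasCharges

theorem exists_hasCharges_of_sum_eq_zero {l : ℕ} [NeZero l] {p : Fin l → ℤ}
    (hp : ∑ i, p i = 0) : ∃ P, HasCharges l P p := by
  classical
  set B : Set ℤ := {b | ∃ (q : ℤ) (i : Fin l), b = l * q + i ∧ q < p i}
  have hB : ∀ (i : Fin l) (q : ℤ), (l : ℤ) * q + i ∈ B ↔ q < p i := fun i q =>
    ⟨fun ⟨q', i', he, hq'⟩ => by obtain ⟨rfl, rfl⟩ := mul_add_fin_inj he; exact hq',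
      fun hq => ⟨q, i, rfl, hq⟩⟩
  obtain ⟨M, hM⟩ := Finite.exists_le fun i => (p i).natAbs
  have hl : (0 : ℤ) < l := by exact_mod_cast Nat.pos_of_neZero l
  have hp' : ∀ i, -(M : ℤ) ≤ p i ∧ p i ≤ M := fun i => by have := hM i; omega
  have hlow : ∀ k : ℤ, k < -((l * M : ℕ) : ℤ) → k ∈ B := fun k hk => by
    obtain ⟨q, i, rfl⟩ := exists_eq_mul_add_fin (l := l) k
    refine (hB i q).mpr ?_
    push_cast at hk
    by_contra hq
    nlinarith [hp' i, i.isLt]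
  have hhigh : ∀ k ∈ B, k < ((l * M : ℕ) : ℤ) := fun k ⟨q, i, hk, hq⟩ => by
    push_cast
    nlinarith [hp' i, i.isLt]
  have hcard : (B ∩ Set.Ico (-((l * M : ℕ) : ℤ)) ((l * M : ℕ) : ℤ)).ncard = l * M := by
    have hset : B ∩ Set.Ico (-((l * M : ℕ) : ℤ)) ((l * M : ℕ) : ℤ) =
        ↑((Ico ((l : ℤ) * -M) (l * M)).filter (· ∈ B)) := by
      ext; simp only [coe_filter, mem_Ico, Set.mem_inter_iff, Set.mem_Ico, Set.mem_ofPred_eq]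
      push_cast; simp only [mul_neg]; tauto
    rw [hset, Set.ncard_coe_finset, card_eq_sum_ones, sum_filter_Ico_mul_eq hB fun i => (hp' i).2]
    simp only [← card_eq_sum_ones, Int.card_Ico]
    zify
    rw [sum_congr rfl fun i _ => Int.toNat_of_nonneg (by linarith [hp' i]), sum_sub_distrib, hp]
    simp
  obtain ⟨P, hP⟩ := exists_range_beta_eq B (l * M) hlow hhigh hcard
  exact ⟨P, fun i q => hP ▸ hB i q⟩

theorem exists_hasCharges_of_beta_sub_mem {l : ℕ} [NeZero l] {P : Partition'}
    (hP : ∀ n, P.beta n - l ∈ Set.range P.beta) : ∃ p, HasCharges l P p := by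
  obtain ⟨N, hN⟩ := P.eventually_zero
  have hl : (1 : ℤ) ≤ l := by exact_mod_cast Nat.pos_of_neZero l
  choose p hp using fun i : Fin l =>
    exists_forall_mem_iff_lt (S := {q | (l : ℤ) * q + i ∈ Set.range P.beta})
      (fun q ⟨n, hn⟩ => by
        have := hP n
        rwa [hn, show (l : ℤ) * q + i - l = l * (q - 1) + i by ring] at this)
      ⟨-N - 1, mem_range_beta_of_lt hN (by nlinarith [i.isLt])⟩
      ⟨|P.beta 0|, fun q ⟨n, hn⟩ => by
        have := P.beta_add_le_beta_zero n
        nlinarith [le_abs_self (P.beta 0), abs_nonneg (P.beta 0)]⟩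
  exact ⟨p, hp⟩

lemma Adj.symm {x y : ℕ × ℕ} (h : Adj x y) : Adj y x := by
  unfold Adj at *; omega

abbrev BoxJoined (H : Set (ℕ × ℕ)) : ℕ × ℕ → ℕ × ℕ → Prop :=
  Relation.ReflTransGen fun a b => a ∈ H ∧ b ∈ H ∧ Adj a b

namespace BoxJoined

variable {H : Set (ℕ × ℕ)} {x y z : ℕ × ℕ}

lemma symm (h : BoxJoined H x y) : BoxJoined H y x := by
  induction h with
  | refl => exact .refl
  | tail _ hbc ih => exact .head ⟨hbc.2.1, hbc.1, hbc.2.2.symm⟩ ih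

lemma trans (hxy : BoxJoined H x y) (hyz : BoxJoined H y z) : BoxJoined H x z :=
  Relation.ReflTransGen.trans hxy hyz

lemma of_row {m m' n : ℕ} (hmm' : m ≤ m') (hrow : ∀ j, m ≤ j → j ≤ m' → (j, n) ∈ H) :
    BoxJoined H (m', n) (m, n) := by
  induction m', hmm' using Nat.le_induction with
  | base => exact .refl
  | succ k hk ih =>
    exact .head ⟨hrow _ (by omega) le_rfl, hrow k hk (by omega), by unfold Adj; omega⟩
      (ih fun j h1 h2 => hrow j h1 (by omega))

lemma snd_le {n : ℕ} (hgap : ∀ m, (m, n) ∈ H → (m, n + 1) ∉ H) (h : BoxJoined H x y)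
    (hx : x.2 ≤ n) : y.2 ≤ n := by
  induction h with
  | refl => exact hx
  | @tail b c _ hbc ih =>
    obtain ⟨hb, hc, hadj⟩ := hbc
    by_contra hcn
    obtain ⟨b1, b2⟩ := b
    obtain ⟨c1, c2⟩ := c
    obtain ⟨rfl, rfl, rfl⟩ : c1 = b1 ∧ b2 = n ∧ c2 = n + 1 := by
      simp only at ih hcn; unfold Adj at hadj; omega
    exact hgap _ hb hc

end BoxJoined

namespace Partition'

variable {lam mu : Partition'}

lemma cells_sdiff_eq (lam mu : Partition') :
    lam.cells \ mu.cells = {c | c.1 ∈ Ico (mu.parts c.2) (lam.parts c.2)} := by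
  ext; simp [and_comm]

lemma mem_cells_sdiff {m n : ℕ} :
    (m, n) ∈ lam.cells \ mu.cells ↔ mu.parts n ≤ m ∧ m < lam.parts n := by
  simp [cells_sdiff_eq]

lemma parts_le_of_cells_subset (h : mu.cells ⊆ lam.cells) (n : ℕ) :
    mu.parts n ≤ lam.parts n := by
  by_contra hn
  simpa using h (show (lam.parts n, n) ∈ mu.cells by simpa using hn)

lemma parts_succ_le_of_not_hasSquare (h : ¬ HasSquare (lam.cells \ mu.cells)) (n : ℕ) :
    lam.parts (n + 1) ≤ mu.parts n + 1 := by
  by_contra hn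
  have := lam.antitone (show n ≤ n + 1 by omega)
  have := mu.antitone (show n ≤ n + 1 by omega)
  exact h ⟨mu.parts n, n, by simp only [mem_cells_sdiff]; omega⟩

lemma lt_parts_succ_of_connectedIn (h : ConnectedIn (lam.cells \ mu.cells)) {a b n : ℕ}
    (ha : mu.parts a < lam.parts a) (hb : mu.parts b < lam.parts b) (han : a ≤ n) (hnb : n < b) :
    mu.parts n < lam.parts (n + 1) := by
  by_contra hn
  have hpath := h (mu.parts a, a) (mem_cells_sdiff.mpr ⟨le_rfl, ha⟩)
    (mu.parts b, b) (mem_cells_sdiff.mpr ⟨le_rfl, hb⟩)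
  have := BoxJoined.snd_le (n := n) (fun m hm hm' => by
    rw [mem_cells_sdiff] at hm hm'; omega) hpath han
  omega

end Partition'

/-- `λ/μ` is a border strip occupying exactly the rows `a, …, b`: consecutive rows overlap in
exactly one column. -/
def IsBorderStrip (lam mu : Partition') (a b : ℕ) : Prop :=
  a ≤ b ∧ (∀ n, n < a ∨ b < n → mu.parts n = lam.parts n) ∧
    (∀ n, a ≤ n → n < b → mu.parts n + 1 = lam.parts (n + 1)) ∧ mu.parts b < lam.parts b

namespace IsBorderStrip

variable {lam mu : Partition'} {a b : ℕ}

lemma parts_lt (h : IsBorderStrip lam mu a b) {n : ℕ} (han : a ≤ n) (hnb : n ≤ b) :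
    mu.parts n < lam.parts n := by
  obtain ⟨-, -, hstep, hb⟩ := h
  rcases hnb.lt_or_eq with hnb | rfl
  · have := hstep n han hnb
    have := lam.antitone (show n ≤ n + 1 by omega)
    omega
  · exact hb

lemma parts_le (h : IsBorderStrip lam mu a b) (n : ℕ) : mu.parts n ≤ lam.parts n := by
  by_cases hn : a ≤ n ∧ n ≤ b
  · exact (h.parts_lt hn.1 hn.2).le
  · exact (h.2.1 n (by omega)).le

lemma row_mem (h : IsBorderStrip lam mu a b) {m n : ℕ} (hmn : (m, n) ∈ lam.cells \ mu.cells) :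
    a ≤ n ∧ n ≤ b := by
  rw [mem_cells_sdiff] at hmn
  by_contra hn
  have := h.2.1 n (by omega)
  omega

lemma ncard_eq (h : IsBorderStrip lam mu a b) :
    ((lam.cells \ mu.cells).ncard : ℤ) = lam.beta a - mu.beta b := by
  obtain ⟨hab, hout, hstep, -⟩ := id h
  have hrow : ∀ n, ((Ico (mu.parts n) (lam.parts n)).card : ℤ) = lam.beta n - mu.beta n :=
    fun n => by
      rw [Nat.card_Ico, Nat.cast_sub (h.parts_le n), lam.coe_parts, mu.coe_parts]; ring
  rw [cells_sdiff_eq, ncard_setOf_mem_rows (fun n => Ico (mu.parts n) (lam.parts n)) (N := b + 1)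
      fun n hn => by simp [hout n (by omega)], Nat.cast_sum,
    ← sum_range_add_sum_Ico _ (by omega : a ≤ b + 1), sum_Ico_succ_top hab]
  have hbefore : ∑ n ∈ range a, ((Ico (mu.parts n) (lam.parts n)).card : ℤ) = 0 :=
    sum_eq_zero fun n hn => by simp [hout n (Or.inl (mem_range.mp hn))]
  have hbetween : ∑ n ∈ Ico a b, ((Ico (mu.parts n) (lam.parts n)).card : ℤ) =
      ∑ n ∈ Ico a b, (-lam.beta (n + 1) - -lam.beta n) :=
    sum_congr rfl fun n hn => by
      rw [mem_Ico] at hn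
      have := hstep n hn.1 hn.2
      rw [hrow]
      have := mu.coe_parts n
      have := lam.coe_parts n
      have := lam.coe_parts (n + 1)
      omega
  rw [hbefore, hbetween, sum_Ico_sub (f := fun n => -lam.beta n) hab, hrow]
  ring

lemma boxJoined_corner (h : IsBorderStrip lam mu a b) {n : ℕ} (han : a ≤ n) (hnb : n ≤ b) :
    BoxJoined (lam.cells \ mu.cells) (mu.parts n, n) (mu.parts b, b) := by
  suffices ∀ k n, n + k = b → a ≤ n →
      BoxJoined (lam.cells \ mu.cells) (mu.parts n, n) (mu.parts b, b) from
    this (b - n) n (by omega) han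
  intro k
  induction k with
  | zero => rintro n rfl -; exact .refl
  | succ k ih =>
    intro n hnk han
    have hstep := h.2.2.1 n han (by omega)
    have hmu := mu.antitone (show n ≤ n + 1 by omega)
    have hup : (mu.parts n, n + 1) ∈ lam.cells \ mu.cells := mem_cells_sdiff.mpr ⟨hmu, by omega⟩
    exact .head ⟨mem_cells_sdiff.mpr ⟨le_rfl, h.parts_lt han (by omega)⟩, hup, by unfold Adj; omega⟩
      ((BoxJoined.of_row hmu fun j h1 h2 => mem_cells_sdiff.mpr ⟨h1, by omega⟩).trans
        (ih (n + 1) (by omega) (by omega)))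

lemma connectedIn (h : IsBorderStrip lam mu a b) : ConnectedIn (lam.cells \ mu.cells) := by
  have hcorner : ∀ c ∈ lam.cells \ mu.cells,
      BoxJoined (lam.cells \ mu.cells) c (mu.parts b, b) := by
    rintro ⟨m, n⟩ hc
    obtain ⟨han, hnb⟩ := h.row_mem hc
    rw [mem_cells_sdiff] at hc
    exact (BoxJoined.of_row hc.1 fun j h1 h2 => mem_cells_sdiff.mpr ⟨h1, by omega⟩).trans
      (h.boxJoined_corner han hnb)
  exact fun x hx y hy => (hcorner x hx).trans (hcorner y hy).symm

lemma not_hasSquare (h : IsBorderStrip lam mu a b) : ¬ HasSquare (lam.cells \ mu.cells) := by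
  rintro ⟨m, n, h1, -, -, h4⟩
  obtain ⟨han, -⟩ := h.row_mem h1
  obtain ⟨-, hnb⟩ := h.row_mem h4
  rw [mem_cells_sdiff] at h1 h4
  have := h.2.2.1 n han (by omega)
  omega

lemma isRimHook (h : IsBorderStrip lam mu a b) :
    IsRimHook (lam.cells \ mu.cells).ncard lam (lam.cells \ mu.cells) := by
  have hfin : (lam.cells \ mu.cells).Finite := by
    rw [cells_sdiff_eq, setOf_mem_rows_eq (fun n => Ico (mu.parts n) (lam.parts n)) (N := b + 1)
      fun n hn => by simp [h.2.1 n (by omega)]]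
    exact finite_toSet _
  have hsub : mu.cells ⊆ lam.cells := fun c hc => (mem_cells.mp hc).trans_le (h.parts_le c.2)
  exact ⟨Set.sdiff_subset, hfin, rfl, h.connectedIn, h.not_hasSquare, mu,
    (Set.sdiff_sdiff_cancel_left hsub).symm⟩

lemma beta_not_mem_range (h : IsBorderStrip lam mu a b) : mu.beta b ∉ Set.range lam.beta := by
  rintro ⟨m, hm⟩
  have := h.2.2.2
  have := h.2.1 (b + 1) (Or.inr (by omega))
  have := mu.beta_strictAnti (show b < b + 1 by omega)
  have := mu.coe_parts b; have := lam.coe_parts b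
  have := mu.coe_parts (b + 1); have := lam.coe_parts (b + 1)
  have h1 : lam.beta m < lam.beta b := by omega
  have h2 : lam.beta (b + 1) < lam.beta m := by omega
  have := lam.beta_strictAnti.lt_iff_gt.mp h1
  have := lam.beta_strictAnti.lt_iff_gt.mp h2
  omega

end IsBorderStrip

theorem exists_isBorderStrip_of_isRimHook {l : ℕ} (hl : 0 < l) {lam : Partition'}
    {H : Set (ℕ × ℕ)} (hH : IsRimHook l lam H) :
    ∃ mu a b, IsBorderStrip lam mu a b ∧ H = lam.cells \ mu.cells := by
  obtain ⟨hsub, -, hcard, hconn, hsq, mu, hmu⟩ := hH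
  have hle := parts_le_of_cells_subset (hmu ▸ Set.sdiff_subset : mu.cells ⊆ lam.cells)
  obtain rfl : H = lam.cells \ mu.cells := by rw [hmu, Set.sdiff_sdiff_cancel_left hsub]
  obtain ⟨N, hN⟩ := lam.eventually_zero
  set R := (range N).filter fun n => mu.parts n < lam.parts n
  have hR : ∀ n, n ∈ R ↔ mu.parts n < lam.parts n := fun n => by
    simp only [R, mem_filter, mem_range, and_iff_right_iff_imp]
    intro hn; by_contra hnN; have := hN n (by omega); omega
  have hne : R.Nonempty := by
    obtain ⟨⟨m, n⟩, hc⟩ := Set.nonempty_of_ncard_ne_zero (s := lam.cells \ mu.cells) (by omega)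
    exact ⟨n, (hR n).mpr (by rw [mem_cells_sdiff] at hc; omega)⟩
  have ha := (hR _).mp (R.min'_mem hne)
  have hb := (hR _).mp (R.max'_mem hne)
  refine ⟨mu, R.min' hne, R.max' hne,
    ⟨R.min'_le _ (R.max'_mem hne), fun n hn => ?_, fun n han hnb => ?_, hb⟩, rfl⟩
  · have : n ∉ R := fun hnR => by have := R.min'_le n hnR; have := R.le_max' n hnR; omega
    rw [hR] at this
    have := hle n
    omega
  · have := lt_parts_succ_of_connectedIn hconn ha hb han hnb
    have := parts_succ_le_of_not_hasSquare hsq n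
    omega

lemma exists_beta_succ_lt_lt_beta {lam : Partition'} {t : ℤ} (ht : t ∉ Set.range lam.beta)
    {a : ℕ} (hta : t < lam.beta a) : ∃ b, a ≤ b ∧ lam.beta (b + 1) < t ∧ t < lam.beta b := by
  classical
  have hex : ∃ n, lam.beta n < t := ⟨(lam.beta 0 - t + 1).toNat, by
    have := lam.beta_add_le_beta_zero (lam.beta 0 - t + 1).toNat; omega⟩
  have hac : a < Nat.find hex := by
    by_contra
    have := lam.beta_strictAnti.antitone (show Nat.find hex ≤ a by omega)
    have := Nat.find_spec hex
    omega
  refine ⟨Nat.find hex - 1, by omega, ?_, ?_⟩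
  · rw [show Nat.find hex - 1 + 1 = Nat.find hex by omega]
    exact Nat.find_spec hex
  · exact lt_of_le_of_ne (not_lt.mp (Nat.find_min hex (by omega))) fun h => ht ⟨_, h.symm⟩

theorem exists_isBorderStrip_of_not_mem {lam : Partition'} {t : ℤ}
    (ht : t ∉ Set.range lam.beta) {a : ℕ} (hta : t < lam.beta a) :
    ∃ mu b, IsBorderStrip lam mu a b ∧ mu.beta b = t := by
  obtain ⟨b, hab, hbt, htb⟩ := exists_beta_succ_lt_lt_beta ht hta
  have hb : ∀ m ≤ b, t < lam.beta m := fun m hm => htb.trans_le (lam.beta_strictAnti.antitone hm)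
  have hb1 : ∀ m, b < m → lam.beta m < t := fun m hm =>
    (lam.beta_strictAnti.antitone (show b + 1 ≤ m by omega)).trans_lt hbt
  -- remove `β_a` and insert `t` between `β_b` and `β_{b+1}`
  let f : ℕ → ℤ := fun n =>
    if n < a ∨ b < n then lam.beta n else if n < b then lam.beta (n + 1) else t
  have hf : StrictAnti f := strictAnti_nat_of_succ_lt fun n => by
    have := lam.beta_strictAnti (show n < n + 1 by omega)
    have := lam.beta_strictAnti (show n + 1 < n + 1 + 1 by omega)
    have := hb n; have := hb (n + 1); have := hb (n + 1 + 1); have := hb1 n; have := hb1 (n + 1)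
    simp only [f]
    split_ifs <;> omega
  have hfN : ∃ N : ℕ, ∀ n ≥ N, f n = -n - 1 := by
    obtain ⟨N, hN⟩ := lam.eventually_zero
    refine ⟨N + b + 1, fun n hn => ?_⟩
    simp only [f, if_pos (Or.inr (show b < n by omega))]
    exact beta_eq_of_parts_eq_zero (hN n (by omega))
  have hmu := beta_ofBeta f hf hfN
  have hparts : ∀ n, ((ofBeta f hf hfN).parts n : ℤ) = f n + n + 1 := fun n => by
    rw [coe_parts, hmu]
  refine ⟨ofBeta f hf hfN, b, ⟨hab, fun n hn => ?_, fun n han hnb => ?_, ?_⟩, ?_⟩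
  · have := hparts n; have := lam.coe_parts n
    simp only [f, if_pos hn] at *
    omega
  · have := hparts n; have := lam.coe_parts (n + 1)
    simp only [f, if_neg (show ¬(n < a ∨ b < n) by omega), if_pos hnb] at *
    omega
  · have := hparts b; have := lam.coe_parts b; have := hb b le_rfl
    simp only [f, if_neg (show ¬(b < a ∨ b < b) by omega), lt_irrefl, if_false] at *
    omega
  · rw [hmu]
    simp only [f, if_neg (show ¬(b < a ∨ b < b) by omega), lt_irrefl, if_false]

theorem exists_isRimHook_iff {l : ℕ} (hl : 0 < l) (lam : Partition') :
    (∃ H, IsRimHook l lam H) ↔ ∃ a, lam.beta a - l ∉ Set.range lam.beta := by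
  constructor
  · rintro ⟨H, hH⟩
    obtain ⟨mu, a, b, h, rfl⟩ := exists_isBorderStrip_of_isRimHook hl hH
    have := h.ncard_eq
    rw [hH.2.2.1] at this
    exact ⟨a, (show lam.beta a - l = mu.beta b by omega) ▸ h.beta_not_mem_range⟩
  · rintro ⟨a, ha⟩
    obtain ⟨mu, b, h, hb⟩ := exists_isBorderStrip_of_not_mem (a := a) ha (by omega)
    have := h.ncard_eq
    exact ⟨_, (show (lam.cells \ mu.cells).ncard = l by omega) ▸ h.isRimHook⟩

theorem isLCore_iff {l : ℕ} (hl : 0 < l) (lam : Partition') :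
    IsLCore l lam ↔ ∀ a, lam.beta a - l ∈ Set.range lam.beta := by
  simp only [IsLCore, exists_isRimHook_iff hl, not_exists, not_not]

open Classical in
/-- Junk value `0` for partitions that are not `l`-cores. -/
noncomputable def charges (l : ℕ) (P : Partition') : Fin l → ℤ :=
  if h : ∃ p, HasCharges l P p then h.choose else 0

lemma hasCharges_charges {l : ℕ} [NeZero l] {P : Partition'} (hP : IsLCore l P) :
    HasCharges l P (charges l P) := by
  have h := exists_hasCharges_of_beta_sub_mem ((isLCore_iff (Nat.pos_of_neZero l) P).mp hP)
  rw [charges, dif_pos h]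
  exact h.choose_spec

theorem bijOn_charges {l r : ℕ} [NeZero l] (hr : r < l) (N : ℕ) :
    Set.BijOn (charges l) {c | IsLCore l c ∧ contentCount l c (-r) = N}
      {p | ∑ i, p i = 0 ∧ thetaWeight l r p = 2 * N} := by
  refine ⟨fun c ⟨hc, hN⟩ => ?_, fun c ⟨hc, _⟩ c' ⟨hc', _⟩ he => ?_, fun p ⟨hp, hN⟩ => ?_⟩
  · have h := hasCharges_charges hc
    exact ⟨h.sum_eq_zero, by rw [← h.two_mul_contentCount hr, hN]⟩
  · exact (hasCharges_charges hc).eq_of_hasCharges (he ▸ hasCharges_charges hc')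
  · obtain ⟨P, hP⟩ := exists_hasCharges_of_sum_eq_zero hp
    have hcore : IsLCore l P := (isLCore_iff (Nat.pos_of_neZero l) P).mpr hP.beta_sub_mem
    refine ⟨P, ⟨hcore, ?_⟩, (hasCharges_charges hcore).unique hP⟩
    have := hP.two_mul_contentCount hr
    omega

/-- For every `l ≥ 2` and residue `0 ≤ r ≤ l−1`, the identity of formal
power series `∑_{λ an l-core} q^{∑_k N_{kl−r}(λ)} = ∑_{∑ p_i = 0} q^{(1/2)∑ p_i² + ∑_{i=l−r}^{l−1} p_i}`
holds: all exponents on the right are nonnegative integers, and for every `N ≥ 0` the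
(finite) number of `l`-cores `λ` with `∑_k N_{kl−r}(λ) = N` equals the (finite) number of
integer vectors `(p_i)` with `∑ p_i = 0` and `(1/2)∑ p_i² + ∑_{i=l−r}^{l−1} p_i = N`. -/
theorem lcore_theta_function (l : ℕ) (hl : 2 ≤ l) (r : ℕ) (hr : r < l) :
    (∀ p : Fin l → ℤ, ∑ i, p i = 0 →
      ∃ N : ℕ, (N : ℚ) = (∑ i, (p i : ℚ) ^ 2) / 2
        + ∑ i ∈ Finset.univ.filter (fun i : Fin l => l - r ≤ (i : ℕ)), (p i : ℚ)) ∧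
    (∀ N : ℕ,
      {c : Partition' | IsLCore l c ∧ contentCount l c (-(r : ℤ)) = N}.Finite ∧
      {p : Fin l → ℤ | ∑ i, p i = 0 ∧ (∑ i, (p i : ℚ) ^ 2) / 2
        + ∑ i ∈ Finset.univ.filter (fun i : Fin l => l - r ≤ (i : ℕ)), (p i : ℚ)
          = (N : ℚ)}.Finite ∧
      {c : Partition' | IsLCore l c ∧ contentCount l c (-(r : ℤ)) = N}.ncard =
        {p : Fin l → ℤ | ∑ i, p i = 0 ∧ (∑ i, (p i : ℚ) ^ 2) / 2
          + ∑ i ∈ Finset.univ.filter (fun i : Fin l => l - r ≤ (i : ℕ)), (p i : ℚ)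
            = (N : ℚ)}.ncard) := by
  have : NeZero l := ⟨by omega⟩
  have hweight : ∀ (p : Fin l → ℤ) (N : ℕ), (∑ i, (p i : ℚ) ^ 2) / 2 +
      ∑ i ∈ univ.filter (fun i : Fin l => l - r ≤ (i : ℕ)), (p i : ℚ) = N ↔
        thetaWeight l r p = 2 * N := fun p N => by
    rw [← Int.cast_inj (α := ℚ), cast_thetaWeight]
    push_cast
    constructor <;> intro h <;> linarith
  refine ⟨fun p hp => ?_, fun N => ?_⟩
  · obtain ⟨k, hk⟩ := even_thetaWeight (r := r) hp
    have := thetaWeight_nonneg (r := r) hp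
    exact ⟨k.toNat, ((hweight p k.toNat).mpr (by omega)).symm⟩
  · simp only [hweight]
    have hbij := bijOn_charges hr N
    have hfin := finite_setOf_thetaWeight_eq l r (2 * N)
    exact ⟨hfin.of_injOn hbij.mapsTo hbij.injOn, hfin,
      by rw [← hbij.image_eq, hbij.injOn.ncard_image]⟩
end

section
/- Fix an integer l ≥ 2 and a residue 0 ≤ r ≤ l−1. Define φ : ℤ^l → ℤ^l on coordinates (n, n_1, …, n_{l−1}) by p_0 = n + n_1 + r, p_i = n − n_i + n_{i+1} for 1 ≤ i ≤ l−2, and p_{l−1} = n − n_{l−1}. Then (i) φ is a bijection onto {(p_0,…,p_{l−1}) ∈ ℤ^l : ∑_i p_i ≡ r (mod l)}, with ∑_i p_i = ln + r; and (ii) under φ, writing p = ln + r, one has (1/l)·( (l/2)∑_i p_i² − (l+1)p/2 − p²/2 + (l+1)ln/2 + (r+1)r/2 ) = ∑_{i=1}^{l−1} n_i² − ∑_{i=1}^{l−2} n_i n_{i+1} + n_1 r + r(r−1)/2. -/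
/-- The change of variables `φ`: given `n` and `n_1, …, n_{l−1}` (encoded as `ν : ℕ → ℤ`,
only the values `ν 1, …, ν (l−1)` being relevant), the vector `(p_0, …, p_{l−1})` is
defined by `p_0 = n + n_1 + r`, `p_i = n − n_i + n_{i+1}` for `1 ≤ i ≤ l−2`, and
`p_{l−1} = n − n_{l−1}`. -/
def PhiRel (l : ℕ) (r : ℤ) (n : ℤ) (ν : ℕ → ℤ) (p : ℕ → ℤ) : Prop :=
  p 0 = n + ν 1 + r ∧
  (∀ i : ℕ, 1 ≤ i → i ≤ l - 2 → p i = n - ν i + ν (i + 1)) ∧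
  p (l - 1) = n - ν (l - 1)

/-!
Put `ν 0 = -r` (and keep `ν l = 0`): then all `l` equations of `φ` read
`p i = n + ν (i + 1) - ν i`. Hence `∑ p i` telescopes to `l n + r`; conversely `n` is forced by
`∑ p i = l n + r` and `ν` by its partial sums `ν j = -r + ∑_{i<j} (p i - n)`. Finally
`∑ p i ^ 2 = l n ^ 2 + 2 n r + ∑ (ν (i + 1) - ν i) ^ 2`, and the last sum is `r ^ 2` plus twice the
`A_{l-1}` quadratic form `∑ ν i ^ 2 - ∑ ν i ν (i + 1) + r ν 1`.
-/

open Finset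

theorem eq_add_sum_range_sub {G : Type*} [AddCommGroup G] (f : ℕ → G) (j : ℕ) :
    f j = f 0 + ∑ i ∈ range j, (f (i + 1) - f i) := by
  rw [sum_range_sub, add_sub_cancel]

theorem sum_range_sub_sq {R : Type*} [CommRing R] (f : ℕ → R) (m : ℕ) :
    ∑ i ∈ range m, (f (i + 1) - f i) ^ 2 =
      2 * ∑ i ∈ range (m + 1), f i ^ 2 - f 0 ^ 2 - f m ^ 2
        - 2 * ∑ i ∈ range m, f i * f (i + 1) := by
  induction m with
  | zero =>
    simp only [range_zero, sum_empty, zero_add, range_one, sum_singleton]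
    ring
  | succ m ih =>
    rw [sum_range_succ, ih]
    simp only [sum_range_succ]
    ring

theorem sum_range_add_two {M : Type*} [AddCommMonoid M] (f : ℕ → M) (m : ℕ) :
    ∑ i ∈ range (m + 2), f i = f 0 + ∑ i ∈ Icc 1 m, f i + f (m + 1) := by
  rw [sum_range_succ, sum_range_succ', ← Ico_add_one_right_eq_Icc, sum_Ico_eq_sum_range]
  simp only [add_tsub_cancel_right, add_comm 1, add_comm _ (f 0)]

def withBoundary (r : ℤ) (ν : ℕ → ℤ) : ℕ → ℤ := Function.update ν 0 (-r)

@[simp]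
theorem withBoundary_zero (r : ℤ) (ν : ℕ → ℤ) : withBoundary r ν 0 = -r :=
  Function.update_self _ _ _

@[simp]
theorem withBoundary_of_ne_zero (r : ℤ) (ν : ℕ → ℤ) {i : ℕ} (hi : i ≠ 0) :
    withBoundary r ν i = ν i :=
  Function.update_of_ne hi _ _

@[simp]
theorem withBoundary_succ (r : ℤ) (ν : ℕ → ℤ) (i : ℕ) : withBoundary r ν (i + 1) = ν (i + 1) :=
  withBoundary_of_ne_zero r ν i.succ_ne_zero

section PhiRel

variable {l : ℕ} {r n : ℤ} {ν p : ℕ → ℤ}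

theorem phiRel_iff (hl : 2 ≤ l) (hν : ν l = 0) :
    PhiRel l r n ν p ↔
      ∀ i < l, p i = n + withBoundary r ν (i + 1) - withBoundary r ν i := by
  obtain ⟨m, rfl⟩ : ∃ m, l = m + 2 := ⟨l - 2, by omega⟩
  simp only [PhiRel, withBoundary_succ, show m + 2 - 2 = m from rfl,
    show m + 2 - 1 = m + 1 from rfl]
  constructor
  · rintro ⟨h0, hmid, hlast⟩ i hi
    rcases Nat.lt_or_ge i (m + 1) with hi' | hi'
    · rcases Nat.eq_zero_or_pos i with rfl | hpos
      · rw [withBoundary_zero, h0]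
        ring
      · rw [withBoundary_of_ne_zero _ _ hpos.ne', hmid i hpos (by omega)]
        ring
    · obtain rfl : i = m + 1 := by omega
      rw [withBoundary_succ, hlast, hν]
      ring
  · intro h
    refine ⟨?_, fun i h1 h2 => ?_, ?_⟩
    · rw [h 0 (by omega), withBoundary_zero]
      ring
    · rw [h i (by omega), withBoundary_of_ne_zero _ _ (by omega)]
      ring
    · rw [h (m + 1) (by omega), withBoundary_succ, hν]
      ring

theorem PhiRel.sum_range_eq (hl : 2 ≤ l) (hν : ν l = 0) (h : PhiRel l r n ν p) :
    ∑ i ∈ range l, p i = l * n + r := by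
  rw [sum_congr rfl fun i hi => (phiRel_iff hl hν).1 h i (mem_range.1 hi)]
  simp_rw [add_sub_assoc]
  rw [sum_add_distrib, sum_range_sub, withBoundary_of_ne_zero _ _ (by omega : l ≠ 0), hν]
  simp

theorem PhiRel.withBoundary_eq (hl : 2 ≤ l) (hν : ν l = 0) (h : PhiRel l r n ν p)
    {j : ℕ} (hj : j ≤ l) : withBoundary r ν j = -r + ∑ k ∈ range j, (p k - n) := by
  rw [eq_add_sum_range_sub (withBoundary r ν) j, withBoundary_zero]
  congr 1
  refine sum_congr rfl fun k hk => ?_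
  rw [(phiRel_iff hl hν).1 h k ((mem_range.1 hk).trans_le hj)]
  ring

theorem sum_range_sq_sub_withBoundary (hl : 2 ≤ l) (hν : ν l = 0) :
    ∑ i ∈ range l, (withBoundary r ν (i + 1) - withBoundary r ν i) ^ 2 =
      2 * (∑ i ∈ Icc 1 (l - 1), ν i ^ 2 - ∑ i ∈ Icc 1 (l - 2), ν i * ν (i + 1) + ν 1 * r)
        + r ^ 2 := by
  obtain ⟨m, rfl⟩ : ∃ m, l = m + 2 := ⟨l - 2, by omega⟩
  have hsq : ∑ i ∈ Icc 1 (m + 1), withBoundary r ν i ^ 2 = ∑ i ∈ Icc 1 (m + 1), ν i ^ 2 :=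
    sum_congr rfl fun i hi => by
      rw [withBoundary_of_ne_zero _ _ (Nat.one_le_iff_ne_zero.1 (mem_Icc.1 hi).1)]
  have hmul : ∑ i ∈ Icc 1 m, withBoundary r ν i * withBoundary r ν (i + 1) =
      ∑ i ∈ Icc 1 m, ν i * ν (i + 1) :=
    sum_congr rfl fun i hi => by
      rw [withBoundary_of_ne_zero _ _ (Nat.one_le_iff_ne_zero.1 (mem_Icc.1 hi).1),
        withBoundary_succ]
  rw [sum_range_sub_sq, sum_range_add_two _ (m + 1), sum_range_add_two, hsq, hmul]
  simp only [withBoundary_zero, zero_add, withBoundary_succ, hν, show m + 2 - 1 = m + 1 from rfl,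
    show m + 2 - 2 = m from rfl]
  ring

theorem PhiRel.sum_range_sq_eq (hl : 2 ≤ l) (hν : ν l = 0) (h : PhiRel l r n ν p) :
    ∑ i ∈ range l, p i ^ 2 = l * n ^ 2 + 2 * n * r + r ^ 2 +
      2 * (∑ i ∈ Icc 1 (l - 1), ν i ^ 2 - ∑ i ∈ Icc 1 (l - 2), ν i * ν (i + 1) + ν 1 * r) := by
  set d : ℕ → ℤ := fun i => withBoundary r ν (i + 1) - withBoundary r ν i
  have hp : ∀ i ∈ range l, p i ^ 2 = n ^ 2 + 2 * n * d i + d i ^ 2 := fun i hi => by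
    rw [(phiRel_iff hl hν).1 h i (mem_range.1 hi)]
    ring
  have hd : ∑ i ∈ range l, d i = r := by
    rw [sum_range_sub, withBoundary_of_ne_zero _ _ (by omega : l ≠ 0), hν]
    simp
  rw [sum_congr rfl hp, sum_add_distrib, sum_add_distrib, ← mul_sum, hd,
    sum_range_sq_sub_withBoundary hl hν]
  simp only [sum_const, card_range, nsmul_eq_mul]
  ring

theorem existsUnique_phiRel (hl : 2 ≤ l) (hν : ν l = 0) :
    ∃! p : ℕ → ℤ, (∀ i, l ≤ i → p i = 0) ∧ PhiRel l r n ν p := by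
  refine ⟨fun i => if i < l then n + withBoundary r ν (i + 1) - withBoundary r ν i else 0,
    ⟨fun i hi => if_neg (by omega), (phiRel_iff hl hν).2 fun i hi => if_pos hi⟩, ?_⟩
  rintro q ⟨hq, hqφ⟩
  funext i
  split_ifs with hi
  · exact (phiRel_iff hl hν).1 hqφ i hi
  · exact hq i (by omega)

theorem PhiRel.unique {n' : ℤ} {ν' : ℕ → ℤ} (hl : 2 ≤ l)
    (hν : ν 0 = 0 ∧ ∀ i, l ≤ i → ν i = 0) (hν' : ν' 0 = 0 ∧ ∀ i, l ≤ i → ν' i = 0)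
    (h : PhiRel l r n ν p) (h' : PhiRel l r n' ν' p) : n = n' ∧ ν = ν' := by
  have hνl := hν.2 l le_rfl
  have hν'l := hν'.2 l le_rfl
  obtain rfl : n = n' := by
    have hl0 : (l : ℤ) ≠ 0 := by omega
    have := h.sum_range_eq hl hνl
    exact mul_left_cancel₀ hl0 (by linarith [h'.sum_range_eq hl hν'l])
  refine ⟨rfl, funext fun j => ?_⟩
  by_cases hj : 0 < j ∧ j < l
  · rw [← withBoundary_of_ne_zero r ν hj.1.ne', ← withBoundary_of_ne_zero r ν' hj.1.ne',
      h.withBoundary_eq hl hνl hj.2.le, h'.withBoundary_eq hl hν'l hj.2.le]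
  · rcases Nat.eq_zero_or_pos j with rfl | hpos
    · rw [hν.1, hν'.1]
    · rw [hν.2 j (by omega), hν'.2 j (by omega)]

theorem existsUnique_phiRel_of_sum_emod (hl : 2 ≤ l) (hsum : (∑ i ∈ range l, p i) % l = r) :
    ∃! x : ℤ × (ℕ → ℤ), (x.2 0 = 0 ∧ ∀ i, l ≤ i → x.2 i = 0) ∧ PhiRel l r x.1 x.2 p := by
  set n := (∑ i ∈ range l, p i) / l
  have hn : l * n + r = ∑ i ∈ range l, p i := by rw [← hsum]; exact Int.mul_ediv_add_emod _ _
  set ν : ℕ → ℤ := fun j => if 0 < j ∧ j < l then -r + ∑ k ∈ range j, (p k - n) else 0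
  have hν : ν 0 = 0 ∧ ∀ i, l ≤ i → ν i = 0 := ⟨if_neg (lt_irrefl 0 ·.1), fun i hi => if_neg (by omega)⟩
  have hW : ∀ j ≤ l, withBoundary r ν j = -r + ∑ k ∈ range j, (p k - n) := by
    intro j hj
    rcases Nat.eq_zero_or_pos j with rfl | hpos
    · simp
    rw [withBoundary_of_ne_zero _ _ hpos.ne']
    rcases hj.lt_or_eq with hj | hj
    · exact if_pos ⟨hpos, hj⟩
    · rw [hj, hν.2 l le_rfl, sum_sub_distrib, ← hn]
      simp
  have h : PhiRel l r n ν p := (phiRel_iff hl (hν.2 l le_rfl)).2 fun i hi => by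
    rw [hW (i + 1) hi, hW i hi.le, sum_range_succ]
    ring
  refine ⟨(n, ν), ⟨hν, h⟩, fun x ⟨hx, hxφ⟩ => ?_⟩
  obtain ⟨hn', hν'⟩ := hxφ.unique hl hx hν h
  exact Prod.ext hn' hν'

end PhiRel

theorem theta_to_affine_character_change_of_variables_general (l : ℕ) (hl : 2 ≤ l)
    (r : ℕ) :
    (∀ (n : ℤ) (ν : ℕ → ℤ), ν 0 = 0 → (∀ i, l ≤ i → ν i = 0) →
      ∃! p : ℕ → ℤ, (∀ i, l ≤ i → p i = 0) ∧ PhiRel l r n ν p) ∧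
    (∀ (n : ℤ) (ν : ℕ → ℤ) (p : ℕ → ℤ), ν 0 = 0 → (∀ i, l ≤ i → ν i = 0) →
      (∀ i, l ≤ i → p i = 0) → PhiRel l r n ν p →
      ∑ i ∈ Finset.range l, p i = l * n + r) ∧
    (∀ p : ℕ → ℤ, (∀ i, l ≤ i → p i = 0) →
      (∑ i ∈ Finset.range l, p i) % (l : ℤ) = (r : ℤ) →
      ∃! x : ℤ × (ℕ → ℤ), (x.2 0 = 0 ∧ ∀ i, l ≤ i → x.2 i = 0) ∧
        PhiRel l r x.1 x.2 p) ∧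
    (∀ (n : ℤ) (ν : ℕ → ℤ) (p : ℕ → ℤ), ν 0 = 0 → (∀ i, l ≤ i → ν i = 0) →
      (∀ i, l ≤ i → p i = 0) → PhiRel l r n ν p →
      (1 / (l : ℚ)) * (((l : ℚ) / 2) * ∑ i ∈ Finset.range l, (p i : ℚ) ^ 2
          - (((l : ℚ) + 1) * ((l : ℚ) * (n : ℚ) + (r : ℚ))) / 2
          - ((l : ℚ) * (n : ℚ) + (r : ℚ)) ^ 2 / 2
          + (((l : ℚ) + 1) * (l : ℚ) * (n : ℚ)) / 2 + (((r : ℚ) + 1) * (r : ℚ)) / 2)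
        = ∑ i ∈ Finset.Icc 1 (l - 1), (ν i : ℚ) ^ 2
          - ∑ i ∈ Finset.Icc 1 (l - 2), (ν i : ℚ) * (ν (i + 1) : ℚ)
          + (ν 1 : ℚ) * (r : ℚ) + (r : ℚ) * ((r : ℚ) - 1) / 2) := by
  refine ⟨fun n ν _ hν => existsUnique_phiRel hl (hν l le_rfl),
    fun n ν p _ hν _ h => h.sum_range_eq hl (hν l le_rfl),
    fun p _ hsum => existsUnique_phiRel_of_sum_emod hl hsum,
    fun n ν p _ hν _ h => ?_⟩
  have hsq := congrArg (Int.cast : ℤ → ℚ) (h.sum_range_sq_eq hl (hν l le_rfl))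
  push_cast at hsq
  rw [hsq]
  field_simp
  ring

/-- Fix `l ≥ 2` and `0 ≤ r ≤ l−1`. (i) The map
`φ : (n, n_1, …, n_{l−1}) ↦ (p_0, …, p_{l−1})` is a bijection onto
`{(p_0, …, p_{l−1}) ∈ ℤ^l : ∑ p_i ≡ r (mod l)}`, with `∑ p_i = ln + r`; and (ii) under
`φ`, writing `p = ln + r`,
`(1/l)·((l/2)∑ p_i² − (l+1)p/2 − p²/2 + (l+1)ln/2 + (r+1)r/2)
  = ∑_{i=1}^{l−1} n_i² − ∑_{i=1}^{l−2} n_i n_{i+1} + n_1 r + r(r−1)/2`.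
(Here tuples `(n_1, …, n_{l−1})` and `(p_0, …, p_{l−1})` are encoded as functions
`ℕ → ℤ` vanishing outside the index ranges `[1, l−1]` and `[0, l−1]` respectively.) -/
theorem theta_to_affine_character_change_of_variables (l : ℕ) (hl : 2 ≤ l)
    (r : ℕ) (hr : r < l) :
    (∀ (n : ℤ) (ν : ℕ → ℤ), ν 0 = 0 → (∀ i, l ≤ i → ν i = 0) →
      ∃! p : ℕ → ℤ, (∀ i, l ≤ i → p i = 0) ∧ PhiRel l r n ν p) ∧
    (∀ (n : ℤ) (ν : ℕ → ℤ) (p : ℕ → ℤ), ν 0 = 0 → (∀ i, l ≤ i → ν i = 0) →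
      (∀ i, l ≤ i → p i = 0) → PhiRel l r n ν p →
      ∑ i ∈ Finset.range l, p i = l * n + r) ∧
    (∀ p : ℕ → ℤ, (∀ i, l ≤ i → p i = 0) →
      (∑ i ∈ Finset.range l, p i) % (l : ℤ) = (r : ℤ) →
      ∃! x : ℤ × (ℕ → ℤ), (x.2 0 = 0 ∧ ∀ i, l ≤ i → x.2 i = 0) ∧
        PhiRel l r x.1 x.2 p) ∧
    (∀ (n : ℤ) (ν : ℕ → ℤ) (p : ℕ → ℤ), ν 0 = 0 → (∀ i, l ≤ i → ν i = 0) →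
      (∀ i, l ≤ i → p i = 0) → PhiRel l r n ν p →
      (1 / (l : ℚ)) * (((l : ℚ) / 2) * ∑ i ∈ Finset.range l, (p i : ℚ) ^ 2
          - (((l : ℚ) + 1) * ((l : ℚ) * (n : ℚ) + (r : ℚ))) / 2
          - ((l : ℚ) * (n : ℚ) + (r : ℚ)) ^ 2 / 2
          + (((l : ℚ) + 1) * (l : ℚ) * (n : ℚ)) / 2 + (((r : ℚ) + 1) * (r : ℚ)) / 2)
        = ∑ i ∈ Finset.Icc 1 (l - 1), (ν i : ℚ) ^ 2
          - ∑ i ∈ Finset.Icc 1 (l - 2), (ν i : ℚ) * (ν (i + 1) : ℚ)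
          + (ν 1 : ℚ) * (r : ℚ) + (r : ℚ) * ((r : ℚ) - 1) / 2) :=
  theta_to_affine_character_change_of_variables_general l hl r
end
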